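/- Suppose the group G is finite. Fix i₀ ∈ I and λ₀ ∈ Λ with p := p_{λ₀ i₀} ≠ 𝐨. Then the ℂ-linear map ρ : A → A ⊗[ℂ] A determined on basis vectors by ρ(δ_{(j,g,μ)}) = |G|⁻¹ · Σ_{h∈G} δ_{(j, g h p⁻¹, λ₀)} ⊗ δ_{(i₀, h⁻¹, μ)} is a right inverse of the multiplication map Π : A ⊗[ℂ] A → A (i.e. Π ∘ ρ = id_A) and is an A-bimodule homomorphism: a · ρ(x) = ρ(a * x) and ρ(x) · a = ρ(x * a) for all a, x ∈ A, where the bimodule actions on A ⊗[ℂ] A are a·(u⊗v) = (a*u)⊗v and (u⊗v)·a = u⊗(v*a). In particular, if G is finite then the contracted semigroup algebra ℂ₀[S] is biprojective. -/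

import Mathlib

/-!
Write `p = p_{λ₀ i₀}`. Every summand of `ρ(δ_{(j,g,μ)})` multiplies out to
`δ_{(j, g h p⁻¹ p h⁻¹, μ)} = δ_{(j,g,μ)}`, so `Π ∘ ρ` averages `|G|` copies of the identity.
Left multiplication by `δ_t` only touches the first tensor factor and commutes with `ρ`
summand by summand. Right multiplication by `δ_{(i,k,λ)}` turns the second factor
`δ_{(i₀,h⁻¹,μ)}` into `δ_{(i₀, h⁻¹ q k, λ)}` with `q = p_{μ i}`, and the substitution
`h ↦ q k h` in the sum over `G` absorbs this. All three identities are (bi)linear, so it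
suffices to check them on basis vectors.
-/

open scoped Classical

/-- The product of two nonzero elements of the Rees semigroup `S(G; I, Λ; P)`,
taking values in `S = WithZero (I × G × Λ)`: the result is
`(i, g * p_{λ j} * h, μ)` if the sandwich entry `p_{λ j}` is nonzero, and `∅ = 0`
otherwise. -/
noncomputable def reesMulAux {G I Λ : Type*} [Group G] (P : Λ → I → WithZero G)
    (s t : I × G × Λ) : WithZero (I × G × Λ) :=
  if h : P s.2.2 t.1 = 0 then 0
  else (((s.1, s.2.1 * WithZero.unzero h * t.2.1, t.2.2) : I × G × Λ) :
    WithZero (I × G × Λ))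

/-- The Rees multiplication on `S = (I × G × Λ) ∪ {∅} = WithZero (I × G × Λ)`,
where the adjoined zero `∅ = 0` is absorbing. -/
noncomputable def reesMul {G I Λ : Type*} [Group G] (P : Λ → I → WithZero G)
    (x y : WithZero (I × G × Λ)) : WithZero (I × G × Λ) :=
  if hx : x = 0 then 0
  else if hy : y = 0 then 0
  else reesMulAux P (WithZero.unzero hx) (WithZero.unzero hy)

/-- The product `δ_s * δ_t` of two basis vectors of the contracted semigroup algebra
`A = ℂ₀[S]`: it is `δ_{s·t}` if `s·t ≠ ∅` in `S`, and `0` if `s·t = ∅`. -/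
noncomputable def reesDelta {G I Λ : Type*} [Group G] (P : Λ → I → WithZero G)
    (s t : I × G × Λ) : (I × G × Λ) →₀ ℂ :=
  if h : P s.2.2 t.1 = 0 then 0
  else Finsupp.single (s.1, s.2.1 * WithZero.unzero h * t.2.1, t.2.2) (1 : ℂ)

/-- The multiplication of the contracted semigroup algebra `A = ℂ₀[S]`, as the
(unique) bilinear map determined on basis vectors by `δ_s * δ_t = δ_{s·t}` if
`s·t ≠ ∅` in `S` and `δ_s * δ_t = 0` if `s·t = ∅`. -/
noncomputable def reesAlgMul {G I Λ : Type*} [Group G] (P : Λ → I → WithZero G) :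
    ((I × G × Λ) →₀ ℂ) →ₗ[ℂ] ((I × G × Λ) →₀ ℂ) →ₗ[ℂ] ((I × G × Λ) →₀ ℂ) :=
  Finsupp.lift (((I × G × Λ) →₀ ℂ) →ₗ[ℂ] ((I × G × Λ) →₀ ℂ)) ℂ (I × G × Λ)
    fun s => Finsupp.lift ((I × G × Λ) →₀ ℂ) ℂ (I × G × Λ) fun t => reesDelta P s t

open TensorProduct

/-- The candidate splitting `ρ : A → A ⊗[ℂ] A` of the multiplication of `A = ℂ₀[S]`
for a finite underlying group `G`, determined on basis vectors by
`ρ(δ_{(j,g,μ)}) = |G|⁻¹ ∑_{h ∈ G} δ_{(j, g h p⁻¹, λ₀)} ⊗ δ_{(i₀, h⁻¹, μ)}`. -/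
noncomputable def reesRho {G I Λ : Type*} [Group G] [Fintype G]
    (P : Λ → I → WithZero G) (i₀ : I) (lam₀ : Λ) (hp : P lam₀ i₀ ≠ 0) :
    ((I × G × Λ) →₀ ℂ) →ₗ[ℂ] (((I × G × Λ) →₀ ℂ) ⊗[ℂ] ((I × G × Λ) →₀ ℂ)) :=
  Finsupp.lift (((I × G × Λ) →₀ ℂ) ⊗[ℂ] ((I × G × Λ) →₀ ℂ)) ℂ (I × G × Λ) fun s =>
    (Fintype.card G : ℂ)⁻¹ •
      ∑ h : G,
        Finsupp.single ((s.1, s.2.1 * h * (WithZero.unzero hp)⁻¹, lam₀) : I × G × Λ) (1 : ℂ)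
          ⊗ₜ[ℂ] Finsupp.single ((i₀, h⁻¹, s.2.2) : I × G × Λ) (1 : ℂ)

section
variable {G I Λ : Type*} [Group G] (P : Λ → I → WithZero G)

lemma reesDelta_of_eq_zero {i j : I} {g h : G} {lam μ : Λ} (hq : P lam j = 0) :
    reesDelta P (i, g, lam) (j, h, μ) = 0 :=
  dif_pos hq

lemma reesDelta_of_eq_coe {i j : I} {g h q : G} {lam μ : Λ} (hq : P lam j = q) :
    reesDelta P (i, g, lam) (j, h, μ) = Finsupp.single (i, g * q * h, μ) 1 := by
  simp [reesDelta, hq]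

lemma reesAlgMul_single_single (s t : I × G × Λ) :
    reesAlgMul P (Finsupp.single s 1) (Finsupp.single t 1) = reesDelta P s t := by
  simp [reesAlgMul]

variable [Fintype G] {i₀ : I} {lam₀ : Λ} (hp : P lam₀ i₀ ≠ 0)

lemma reesRho_single (j : I) (g : G) (μ : Λ) :
    reesRho P i₀ lam₀ hp (Finsupp.single (j, g, μ) 1) = (Fintype.card G : ℂ)⁻¹ •
      ∑ h : G, Finsupp.single (j, g * h * (WithZero.unzero hp)⁻¹, lam₀) 1
        ⊗ₜ[ℂ] Finsupp.single (i₀, h⁻¹, μ) 1 := by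
  simp [reesRho]

lemma lift_reesAlgMul_reesRho_single (j : I) (g : G) (μ : Λ) :
    TensorProduct.lift (reesAlgMul P) (reesRho P i₀ lam₀ hp (Finsupp.single (j, g, μ) 1)) =
      Finsupp.single (j, g, μ) 1 := by
  have hp' : P lam₀ i₀ = ↑(WithZero.unzero hp) := (WithZero.coe_unzero hp).symm
  have hcard : (Fintype.card G : ℂ) ≠ 0 := Nat.cast_ne_zero.mpr Fintype.card_ne_zero
  simp only [reesRho_single, map_smul, map_sum, TensorProduct.lift.tmul,
    reesAlgMul_single_single, reesDelta_of_eq_coe P hp', inv_mul_cancel_right,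
    mul_inv_cancel_right, Finset.sum_const, Finset.card_univ, ← Nat.cast_smul_eq_nsmul ℂ,
    smul_smul, inv_mul_cancel₀ hcard, one_smul]

lemma rTensor_reesAlgMul_reesRho_single (t : I × G × Λ) (j : I) (g : G) (μ : Λ) :
    (reesAlgMul P (Finsupp.single t 1)).rTensor _
        (reesRho P i₀ lam₀ hp (Finsupp.single (j, g, μ) 1)) =
      reesRho P i₀ lam₀ hp (reesDelta P t (j, g, μ)) := by
  obtain ⟨i, k, lam⟩ := t
  rw [reesRho_single, map_smul, map_sum]
  cases hq : P lam j with
  | zero => simp [reesAlgMul_single_single, reesDelta_of_eq_zero P hq]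
  | coe q =>
    simp [reesAlgMul_single_single, reesDelta_of_eq_coe P hq, reesRho_single, mul_assoc]

lemma lTensor_reesAlgMul_flip_reesRho_single (t : I × G × Λ) (j : I) (g : G) (μ : Λ) :
    ((reesAlgMul P).flip (Finsupp.single t 1)).lTensor _
        (reesRho P i₀ lam₀ hp (Finsupp.single (j, g, μ) 1)) =
      reesRho P i₀ lam₀ hp (reesDelta P (j, g, μ) t) := by
  obtain ⟨i, k, lam⟩ := t
  rw [reesRho_single, map_smul, map_sum]
  cases hq : P μ i with
  | zero => simp [reesAlgMul_single_single, reesDelta_of_eq_zero P hq]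
  | coe q =>
    simp only [LinearMap.lTensor_tmul, LinearMap.flip_apply, reesAlgMul_single_single,
      reesDelta_of_eq_coe P hq, reesRho_single]
    congr 1
    exact Fintype.sum_equiv (Equiv.mulLeft (q * k)⁻¹) _ _ fun h => by
      simp [mul_assoc]

theorem lift_reesAlgMul_comp_reesRho :
    TensorProduct.lift (reesAlgMul P) ∘ₗ reesRho P i₀ lam₀ hp = LinearMap.id := by
  ext ⟨j, g, μ⟩ : 2
  exact lift_reesAlgMul_reesRho_single P hp j g μ

theorem rTensorHom_comp_reesAlgMul_compl₂_reesRho :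
    (LinearMap.rTensorHom _ ∘ₗ reesAlgMul P).compl₂ (reesRho P i₀ lam₀ hp) =
      (reesAlgMul P).compr₂ (reesRho P i₀ lam₀ hp) := by
  ext t ⟨j, g, μ⟩
  simpa [reesAlgMul_single_single] using rTensor_reesAlgMul_reesRho_single P hp t j g μ

theorem lTensorHom_comp_reesAlgMul_flip_compl₂_reesRho :
    (LinearMap.lTensorHom _ ∘ₗ (reesAlgMul P).flip).compl₂ (reesRho P i₀ lam₀ hp) =
      ((reesAlgMul P).compr₂ (reesRho P i₀ lam₀ hp)).flip := by
  ext t ⟨j, g, μ⟩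
  simpa [reesAlgMul_single_single] using lTensor_reesAlgMul_flip_reesRho_single P hp t j g μ

end

theorem rees_algebra_biprojective_of_finite_group_general
    {G I Λ : Type*} [Group G] [Fintype G]
    (P : Λ → I → WithZero G)
    (i₀ : I) (lam₀ : Λ) (hp : P lam₀ i₀ ≠ 0) :
    (∀ x : (I × G × Λ) →₀ ℂ,
      TensorProduct.lift (reesAlgMul P) (reesRho P i₀ lam₀ hp x) = x) ∧
    (∀ a x : (I × G × Λ) →₀ ℂ,
      TensorProduct.map (reesAlgMul P a) LinearMap.id (reesRho P i₀ lam₀ hp x)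
        = reesRho P i₀ lam₀ hp (reesAlgMul P a x)) ∧
    (∀ a x : (I × G × Λ) →₀ ℂ,
      TensorProduct.map LinearMap.id ((reesAlgMul P).flip a) (reesRho P i₀ lam₀ hp x)
        = reesRho P i₀ lam₀ hp (reesAlgMul P x a)) :=
  ⟨LinearMap.congr_fun (lift_reesAlgMul_comp_reesRho P hp),
    LinearMap.congr_fun₂ (rTensorHom_comp_reesAlgMul_compl₂_reesRho P hp),
    LinearMap.congr_fun₂ (lTensorHom_comp_reesAlgMul_flip_compl₂_reesRho P hp)⟩

/-- if `G` is finite, then `ρ` is a right inverse of the multiplication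
map `Π : A ⊗[ℂ] A → A` and an `A`-bimodule homomorphism (with the actions
`a·(u⊗v) = (a*u)⊗v` and `(u⊗v)·a = u⊗(v*a)`); in particular `ℂ₀[S]` is
biprojective. -/
theorem rees_algebra_biprojective_of_finite_group
    {G I Λ : Type*} [Group G] [Fintype G] [Nonempty I] [Nonempty Λ]
    (P : Λ → I → WithZero G)
    (hrow : ∀ lam : Λ, ∃ i : I, P lam i ≠ 0)
    (hcol : ∀ i : I, ∃ lam : Λ, P lam i ≠ 0)
    (i₀ : I) (lam₀ : Λ) (hp : P lam₀ i₀ ≠ 0) :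
    (∀ x : (I × G × Λ) →₀ ℂ,
      TensorProduct.lift (reesAlgMul P) (reesRho P i₀ lam₀ hp x) = x) ∧
    (∀ a x : (I × G × Λ) →₀ ℂ,
      TensorProduct.map (reesAlgMul P a) LinearMap.id (reesRho P i₀ lam₀ hp x)
        = reesRho P i₀ lam₀ hp (reesAlgMul P a x)) ∧
    (∀ a x : (I × G × Λ) →₀ ℂ,
      TensorProduct.map LinearMap.id ((reesAlgMul P).flip a) (reesRho P i₀ lam₀ hp x)
        = reesRho P i₀ lam₀ hp (reesAlgMul P x a)) :=
  rees_algebra_biprojective_of_finite_group_general P i₀ lam₀ hp
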